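/- arXiv:1908.00857 — 3 statements merged into one kernel-verified Lean document; each statement's English description precedes it below -/
import Mathlib

section
/- Let p, q, r be integers with p ≠ 0, gcd(p, q) = 1, |p| ≥ q ≥ 1, r ≥ 2 and r odd, and assume p is even or q is even. Set n = qr, m = |p|·r. Then there is no x ∈ ℤ^n with T_n^m(x) = x and C(x) = {0, 1, 2, 3}; that is, the standard diagram of T(pr, qr) admits no Z-coloring whose set of colors is exactly {0, 1, 2, 3}. -/
/-- The twist map `T_n : ℤ^n → ℤ^n`,
`T_n(x_1,…,x_n) = (2x_1 − x_2, 2x_1 − x_3, …, 2x_1 − x_n, x_1)` (0-indexed). -/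
def twist (n : ℕ) (x : Fin n → ℤ) : Fin n → ℤ :=
  fun i => if h : (i : ℕ) + 1 < n then 2 * x ⟨0, i.pos⟩ - x ⟨(i : ℕ) + 1, h⟩ else x ⟨0, i.pos⟩

/-- The set of colors `C(x) = { (T_n^k(x))_i : 0 ≤ k < m, 1 ≤ i ≤ n }`. -/
def colors (n m : ℕ) (x : Fin n → ℤ) : Set ℤ :=
  {c | ∃ k, k < m ∧ ∃ i : Fin n, (twist n)^[k] x i = c}

/-!
Write `h k` for the first entry of the row `T^k x`. When all colors lie in `[0, 3]`, the rule
`(T y) i = 2 y 0 - y (i + 1)` confines the row `T^k x` to `[2 h k - 3, 2 h k]`. Hence `h k` is `1`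
or `2` (a head `0` or `3` makes the row constant, i.e. a fixed point of `T`), the heads are not all
equal (otherwise `0` or `3` is missing), and right after a change of head the row lies in `{1, 2}`.

Modulo 2, `T` only rotates the entries, so the parity of `h`, and with it `h`, is periodic with
period `n` as well as `m`, hence with period `gcd m n = r`. Differences of entries are rotated with
a change of sign, so for an odd entry `x a` and an even entry `x b`, a row inside `{1, 2}` at time `s`
gives `(-1)^s (x a - x b) = 1 - 2`. Such rows occur at times `s` and `s + r` with `r` odd.
-/

open Function Set Fin.NatCast

theorem Function.Periodic.nat_gcd {α : Type*} {f : ℕ → α} {a b : ℕ} (ha : Periodic f a)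
    (hb : Periodic f b) : Periodic f (a.gcd b) := by
  induction a, b using Nat.gcd.induction with
  | H0 b => simpa using hb
  | H1 a b _ ih =>
    rw [Nat.gcd_rec]
    refine ih (fun t => ?_) ha
    rw [← ha.nat_mul (b / a) (t + b % a), Nat.cast_id, add_assoc, Nat.mod_add_div', hb]

theorem Function.IsPeriodicPt.eq_of_iterate_eq_isFixedPt {α : Type*} {f : α → α} {m k : ℕ}
    {x y : α} (hx : IsPeriodicPt f m x) (hm : 0 < m) (hy : IsFixedPt f y) (h : f^[k] x = y) :
    x = y :=
  (hx.iterate k).eq_of_apply_eq_same ((hy.iterate k).isPeriodicPt m) hm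
    (h.trans (hy.iterate k).eq.symm)

section Twist

variable {n : ℕ}

theorem twist_apply (y : Fin (n + 1) → ℤ) (i : Fin (n + 1)) :
    twist (n + 1) y i = if i = Fin.last n then y 0 else 2 * y 0 - y (i + 1) := by
  unfold twist
  split_ifs with hlt hlast hlast
  · exact absurd hlt (by rw [hlast, Fin.val_last]; omega)
  · congr 2
    ext
    rw [Fin.val_add_one_of_lt (Fin.lt_last_iff_ne_last.mpr hlast)]
  · rfl
  · exact absurd (Fin.ext (by rw [Fin.val_last]; omega)) hlast

theorem isFixedPt_twist_const (c : ℤ) : IsFixedPt (twist (n + 1)) (fun _ => c) := by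
  funext i
  rw [twist_apply]
  split_ifs <;> ring

theorem twist_sub_twist (y : Fin (n + 1) → ℤ) (i j : Fin (n + 1)) :
    twist (n + 1) y i - twist (n + 1) y j = y (j + 1) - y (i + 1) := by
  simp only [twist_apply]
  split_ifs <;> subst_vars <;> (try rw [Fin.last_add_one]) <;> ring

theorem twist_modEq (y : Fin (n + 1) → ℤ) (i : Fin (n + 1)) :
    twist (n + 1) y i ≡ y (i + 1) [ZMOD 2] := by
  rw [twist_apply]
  split_ifs with hi
  · rw [hi, Fin.last_add_one]
  · exact Int.modEq_iff_dvd.mpr ⟨y (i + 1) - y 0, by ring⟩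

theorem iterate_twist_sub_iterate_twist (y : Fin (n + 1) → ℤ) (k : ℕ) (i j : Fin (n + 1)) :
    (twist (n + 1))^[k] y i - (twist (n + 1))^[k] y j =
      (-1) ^ k * (y (i + (k : Fin (n + 1))) - y (j + (k : Fin (n + 1)))) := by
  induction k generalizing y with
  | zero => simp
  | succ k ih =>
    rw [iterate_succ_apply, ih, twist_sub_twist, pow_succ, Nat.cast_succ,
      ← add_assoc, ← add_assoc]
    ring

theorem iterate_twist_modEq (y : Fin (n + 1) → ℤ) (k : ℕ) (i : Fin (n + 1)) :
    (twist (n + 1))^[k] y i ≡ y (i + (k : Fin (n + 1))) [ZMOD 2] := by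
  induction k generalizing y with
  | zero => simp [Int.ModEq]
  | succ k ih =>
    rw [iterate_succ_apply, Nat.cast_succ, ← add_assoc]
    exact (ih _).trans (twist_modEq y _)

theorem twist_mem_Icc {y : Fin (n + 1) → ℤ} {a b : ℤ} (hy : ∀ i, y i ∈ Icc a b)
    (i : Fin (n + 1)) : twist (n + 1) y i ∈ Icc (2 * y 0 - b) (2 * y 0 - a) := by
  have h0 := hy 0
  have h1 := hy (i + 1)
  rw [twist_apply]
  split_ifs <;> simp only [mem_Icc] at * <;> constructor <;> linarith

theorem mem_Icc_of_twist_mem_Icc {y : Fin (n + 1) → ℤ} {a b : ℤ}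
    (hy : ∀ i, twist (n + 1) y i ∈ Icc a b) (i : Fin (n + 1)) :
    y i ∈ Icc (2 * y 0 - b) (2 * y 0 - a) := by
  obtain ⟨j, rfl⟩ : ∃ j, i = j + 1 := ⟨i - 1, (sub_add_cancel i 1).symm⟩
  have hj := hy j
  have hlast := hy (Fin.last n)
  rw [twist_apply] at hj hlast
  rw [if_pos rfl] at hlast
  split_ifs at hj with h
  · rw [h, Fin.last_add_one]; simp only [mem_Icc] at *; constructor <;> linarith
  · simp only [mem_Icc] at *; constructor <;> linarith

end Twist

theorem pos_of_colors_eq {n m : ℕ} {x : Fin n → ℤ} (hcol : colors n m x = {0, 1, 2, 3}) :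
    0 < m := by
  obtain ⟨k, hk, -⟩ : (0 : ℤ) ∈ colors n m x := by rw [hcol]; simp
  omega

theorem iterate_twist_mem_colors {n m : ℕ} {x : Fin n → ℤ} (hx : IsPeriodicPt (twist n) m x)
    (hm : 0 < m) (k : ℕ) (i : Fin n) : (twist n)^[k] x i ∈ colors n m x :=
  ⟨k % m, Nat.mod_lt k hm, i, by rw [hx.iterate_mod_apply]⟩

theorem colors_const_subset {n m : ℕ} (c : ℤ) : colors (n + 1) m (fun _ => c) ⊆ {c} := by
  rintro _ ⟨k, -, i, rfl⟩
  rw [((isFixedPt_twist_const c).iterate k).eq]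
  rfl

section FourColors

variable {n m : ℕ} {x : Fin (n + 1) → ℤ}

theorem neg_one_pow_mul_sub_eq_neg_one {s : ℕ}
    (hrow : ∀ i, (twist (n + 1))^[s] x i ∈ Icc 1 2) {a b : Fin (n + 1)}
    (ha : x a ≡ 1 [ZMOD 2]) (hb : x b ≡ 0 [ZMOD 2]) : (-1) ^ s * (x a - x b) = -1 := by
  have hsub := iterate_twist_sub_iterate_twist x s (a - s) (b - s)
  have hodd := iterate_twist_modEq x s (a - s)
  have heven := iterate_twist_modEq x s (b - s)
  simp only [sub_add_cancel] at hsub hodd heven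
  have ha' := hrow (a - s)
  have hb' := hrow (b - s)
  simp only [Int.ModEq, mem_Icc] at ha hb hodd heven ha' hb'
  have h1 : (twist (n + 1))^[s] x (a - s) = 1 := by omega
  have h2 : (twist (n + 1))^[s] x (b - s) = 2 := by omega
  rw [← hsub, h1, h2]
  norm_num

theorem iterate_twist_mem_Icc_of_colors_eq (hx : IsPeriodicPt (twist (n + 1)) m x)
    (hcol : colors (n + 1) m x = {0, 1, 2, 3}) (k : ℕ) (i : Fin (n + 1)) :
    (twist (n + 1))^[k] x i ∈ Icc 0 3 := by
  have h := iterate_twist_mem_colors hx (pos_of_colors_eq hcol) k i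
  rw [hcol] at h
  simp only [mem_insert_iff, mem_singleton_iff] at h
  simp only [mem_Icc]
  omega

theorem iterate_twist_mem_Icc_two_mul_apply_zero (hx : IsPeriodicPt (twist (n + 1)) m x)
    (hcol : colors (n + 1) m x = {0, 1, 2, 3}) (k : ℕ) (i : Fin (n + 1)) :
    (twist (n + 1))^[k] x i ∈
      Icc (2 * (twist (n + 1))^[k] x 0 - 3) (2 * (twist (n + 1))^[k] x 0) := by
  simpa only [sub_zero] using mem_Icc_of_twist_mem_Icc (a := 0) (b := 3) (fun j => by
    rw [← iterate_succ_apply' (twist (n + 1))]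
    exact iterate_twist_mem_Icc_of_colors_eq hx hcol (k + 1) j) i

theorem iterate_twist_apply_zero_eq_one_or_two (hx : IsPeriodicPt (twist (n + 1)) m x)
    (hcol : colors (n + 1) m x = {0, 1, 2, 3}) (k : ℕ) :
    (twist (n + 1))^[k] x 0 = 1 ∨ (twist (n + 1))^[k] x 0 = 2 := by
  by_contra hne
  set c := (twist (n + 1))^[k] x 0
  have hconst : (twist (n + 1))^[k] x = fun _ => c := by
    funext i
    have hwin := iterate_twist_mem_Icc_two_mul_apply_zero hx hcol k i
    have hi := iterate_twist_mem_Icc_of_colors_eq hx hcol k i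
    have h0 := iterate_twist_mem_Icc_of_colors_eq hx hcol k 0
    simp only [mem_Icc] at hwin hi h0
    omega
  have hxc := hx.eq_of_iterate_eq_isFixedPt (pos_of_colors_eq hcol) (isFixedPt_twist_const c)
    hconst
  have hsub : ({0, 1, 2, 3} : Set ℤ) ⊆ {c} := hcol ▸ hxc ▸ colors_const_subset c
  have h0 : (0 : ℤ) = c := hsub (by simp)
  have h3 : (3 : ℤ) = c := hsub (by simp)
  omega

theorem exists_iterate_twist_apply_zero_ne (hx : IsPeriodicPt (twist (n + 1)) m x)
    (hcol : colors (n + 1) m x = {0, 1, 2, 3}) :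
    ∃ k, (twist (n + 1))^[k + 1] x 0 ≠ (twist (n + 1))^[k] x 0 := by
  by_contra! hconst
  have hhead : ∀ k, (twist (n + 1))^[k] x 0 = x 0 := by
    intro k
    induction k with
    | zero => rfl
    | succ k ih => rw [hconst k, ih]
  obtain ⟨k₀, -, i₀, h₀⟩ : (0 : ℤ) ∈ colors (n + 1) m x := by rw [hcol]; simp
  obtain ⟨k₃, -, i₃, h₃⟩ : (3 : ℤ) ∈ colors (n + 1) m x := by rw [hcol]; simp
  have hwin₀ := iterate_twist_mem_Icc_two_mul_apply_zero hx hcol k₀ i₀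
  have hwin₃ := iterate_twist_mem_Icc_two_mul_apply_zero hx hcol k₃ i₃
  have hx0 := iterate_twist_apply_zero_eq_one_or_two hx hcol 0
  rw [hhead] at hwin₀ hwin₃ hx0
  simp only [mem_Icc] at hwin₀ hwin₃
  omega

theorem iterate_twist_succ_mem_Icc_one_two (hx : IsPeriodicPt (twist (n + 1)) m x)
    (hcol : colors (n + 1) m x = {0, 1, 2, 3}) {k : ℕ}
    (hk : (twist (n + 1))^[k + 1] x 0 ≠ (twist (n + 1))^[k] x 0) (i : Fin (n + 1)) :
    (twist (n + 1))^[k + 1] x i ∈ Icc 1 2 := by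
  have hnext := twist_mem_Icc (iterate_twist_mem_Icc_of_colors_eq hx hcol k) i
  rw [← iterate_succ_apply' (twist (n + 1)), Nat.succ_eq_add_one] at hnext
  have hwin := iterate_twist_mem_Icc_two_mul_apply_zero hx hcol (k + 1) i
  have hk₀ := iterate_twist_apply_zero_eq_one_or_two hx hcol k
  have hk₁ := iterate_twist_apply_zero_eq_one_or_two hx hcol (k + 1)
  simp only [mem_Icc] at *
  omega

theorem periodic_iterate_twist_apply_zero (hx : IsPeriodicPt (twist (n + 1)) m x)
    (hcol : colors (n + 1) m x = {0, 1, 2, 3}) :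
    Periodic (fun k => (twist (n + 1))^[k] x 0) (m.gcd (n + 1)) := by
  refine Periodic.nat_gcd (fun k => ?_) (fun k => ?_)
  · simp only [iterate_add_apply, hx.eq]
  · have h := iterate_twist_modEq x (k + (n + 1)) 0
    rw [Nat.cast_add, Fin.natCast_self, add_zero] at h
    replace h := h.trans (iterate_twist_modEq x k 0).symm
    have hk₀ := iterate_twist_apply_zero_eq_one_or_two hx hcol k
    have hk₁ := iterate_twist_apply_zero_eq_one_or_two hx hcol (k + (n + 1))
    simp only [Int.ModEq] at h ⊢
    omega

theorem exists_modEq_one_and_modEq_zero (hcol : colors (n + 1) m x = {0, 1, 2, 3}) :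
    ∃ a b, x a ≡ 1 [ZMOD 2] ∧ x b ≡ 0 [ZMOD 2] := by
  obtain ⟨k₁, -, i₁, h₁⟩ : (1 : ℤ) ∈ colors (n + 1) m x := by rw [hcol]; simp
  obtain ⟨k₀, -, i₀, h₀⟩ : (0 : ℤ) ∈ colors (n + 1) m x := by rw [hcol]; simp
  exact ⟨i₁ + k₁, i₀ + k₀, h₁ ▸ (iterate_twist_modEq x k₁ i₁).symm,
    h₀ ▸ (iterate_twist_modEq x k₀ i₀).symm⟩

theorem colors_ne_of_odd_gcd (hx : IsPeriodicPt (twist (n + 1)) m x)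
    (hodd : Odd (m.gcd (n + 1))) : colors (n + 1) m x ≠ {0, 1, 2, 3} := by
  intro hcol
  obtain ⟨a, b, ha, hb⟩ := exists_modEq_one_and_modEq_zero hcol
  obtain ⟨k, hk⟩ := exists_iterate_twist_apply_zero_ne hx hcol
  have hper := periodic_iterate_twist_apply_zero hx hcol
  have hk' : (twist (n + 1))^[k + m.gcd (n + 1) + 1] x 0 ≠
      (twist (n + 1))^[k + m.gcd (n + 1)] x 0 := by
    have hper₁ : (twist (n + 1))^[k + 1 + m.gcd (n + 1)] x 0 = (twist (n + 1))^[k + 1] x 0 :=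
      hper (k + 1)
    have hper₀ : (twist (n + 1))^[k + m.gcd (n + 1)] x 0 = (twist (n + 1))^[k] x 0 := hper k
    rwa [add_right_comm, hper₁, hper₀]
  have h₁ := neg_one_pow_mul_sub_eq_neg_one (iterate_twist_succ_mem_Icc_one_two hx hcol hk) ha hb
  have h₂ := neg_one_pow_mul_sub_eq_neg_one (iterate_twist_succ_mem_Icc_one_two hx hcol hk') ha hb
  rw [add_right_comm, pow_add, hodd.neg_one_pow] at h₂
  linarith

end FourColors

theorem stmt_3_general (p q r : ℤ) (hgcd : Int.gcd p q = 1) (hro : Odd r)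
    (n m : ℕ) (hn : (n : ℤ) = q * r) (hm : (m : ℤ) = |p| * r) :
    ¬ ∃ x : Fin n → ℤ, (twist n)^[m] x = x ∧ colors n m x = {0, 1, 2, 3} := by
  rintro ⟨x, hx, hcol⟩
  obtain ⟨-, -, i, -⟩ : (0 : ℤ) ∈ colors n m x := by rw [hcol]; simp
  obtain ⟨n, rfl⟩ := Nat.exists_eq_add_one_of_ne_zero i.pos.ne'
  have hgcd' : m.gcd (n + 1) = r.natAbs := by
    rw [← Int.gcd_natCast_natCast, hm, hn, Int.gcd_mul_right, Int.gcd_eq_natAbs_gcd_natAbs,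
      Int.natAbs_abs, ← Int.gcd_eq_natAbs_gcd_natAbs, hgcd, one_mul]
  exact colors_ne_of_odd_gcd hx (hgcd' ▸ Int.natAbs_odd.mpr hro) hcol

theorem stmt_3 (p q r : ℤ) (hp : p ≠ 0) (hgcd : Int.gcd p q = 1)
    (hq1 : 1 ≤ q) (hqp : q ≤ |p|) (hr2 : 2 ≤ r) (hro : Odd r)
    (heven : Even p ∨ Even q)
    (n m : ℕ) (hn : (n : ℤ) = q * r) (hm : (m : ℤ) = |p| * r) :
    ¬ ∃ x : Fin n → ℤ, (twist n)^[m] x = x ∧ colors n m x = {0, 1, 2, 3} :=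
  stmt_3_general p q r hgcd hro n m hn hm
end

section
/- Let p, q, r be integers with p ≠ 0, gcd(p, q) = 1, |p| ≥ q ≥ 1, r ≥ 2 and r odd, and assume p is even or q is even. Set n = qr, m = |p|·r. Then there exists x ∈ ℤ^n with T_n^m(x) = x such that C(x) = {0, 1, 2, 3, 4}. -/
open Function

def altSum (X : ℕ → ℤ) (k : ℕ) : ℤ := ∑ j ∈ Finset.range k, (-1) ^ j * X j

lemma altSum_succ (X : ℕ → ℤ) (k : ℕ) : altSum X (k + 1) = altSum X k + (-1) ^ k * X k :=
  Finset.sum_range_succ _ k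

lemma altSum_add {X : ℕ → ℤ} {R : ℕ} (hX : Periodic X R) (k : ℕ) :
    altSum X (R + k) = altSum X R + (-1) ^ R * altSum X k := by
  rw [altSum, altSum, altSum, Finset.sum_range_add, Finset.mul_sum]
  congr 1
  refine Finset.sum_congr rfl fun j _ => ?_
  rw [add_comm R j, hX, pow_add]
  ring

lemma altSum_eq_of_forall_eq {X : ℕ → ℤ} {k : ℕ} {c : ℤ} (hk : k ≠ 0)
    (h : ∀ j, 1 ≤ j → j < k → X j = c) :
    altSum X k = X 0 - c + if Even k then 0 else c := by
  have hsplit : altSum X k =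
      ∑ j ∈ Finset.range k, (-1) ^ j * (X j - c) + (∑ j ∈ Finset.range k, (-1) ^ j) * c := by
    simp only [altSum, Finset.sum_mul, ← Finset.sum_add_distrib]
    exact Finset.sum_congr rfl fun j _ => by ring
  have hhead : ∑ j ∈ Finset.range k, (-1) ^ j * (X j - c) = X 0 - c := by
    rw [Finset.sum_eq_single 0 (fun j hj hj0 => by
      rw [h j (by omega) (Finset.mem_range.mp hj), sub_self, mul_zero]) (by simp [hk])]
    simp
  rw [hsplit, hhead, neg_one_geom_sum]
  split_ifs <;> ring

lemma iterate_twist_apply {n : ℕ} {X : ℕ → ℤ} (hX : Periodic X n) (k : ℕ) (i : Fin n) :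
    (twist n)^[k] (fun j : Fin n => X j) i = 2 * altSum X k + (-1) ^ k * X (i + k) := by
  induction k generalizing i with
  | zero => simp [altSum]
  | succ k ih =>
    rw [iterate_succ_apply', altSum_succ, pow_succ]
    simp only [twist]
    split_ifs with h
    · rw [ih, ih, zero_add, show (i : ℕ) + 1 + k = i + (k + 1) by omega]
      ring
    · rw [ih, zero_add, show (i : ℕ) + (k + 1) = k + n by omega, hX]
      ring

lemma isPeriodicPt_twist {n d : ℕ} {X : ℕ → ℤ} (hX : Periodic X n)
    (h : ∀ j, 2 * altSum X d + (-1) ^ d * X (j + d) = X j) :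
    IsPeriodicPt (twist n) d (fun j : Fin n => X j) :=
  funext fun i => by rw [iterate_twist_apply hX]; exact h i

lemma colors_eq_of_isPeriodicPt {n d m : ℕ} {x : Fin n → ℤ} (hx : IsPeriodicPt (twist n) d x)
    (hd : d ≠ 0) (hdm : d ≤ m) : colors n m x = colors n d x := by
  ext c
  constructor
  · rintro ⟨k, -, i, rfl⟩
    exact ⟨k % d, Nat.mod_lt _ (Nat.pos_of_ne_zero hd), i, by rw [hx.iterate_mod_apply]⟩
  · rintro ⟨k, hk, i, rfl⟩
    exact ⟨k, hk.trans_le hdm, i, rfl⟩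

lemma colors_eq_of_periodic {n d : ℕ} {X : ℕ → ℤ} (hn : n ≠ 0) (hX : Periodic X n) :
    colors n d (fun j : Fin n => X j) = {c | ∃ k < d, ∃ j, 2 * altSum X k + (-1) ^ k * X j = c} := by
  ext c
  constructor
  · rintro ⟨k, hk, i, rfl⟩
    exact ⟨k, hk, i + k, (iterate_twist_apply hX k i).symm⟩
  · rintro ⟨k, hk, j, rfl⟩
    -- the coordinate `i ≡ j - k` sees `X j` after `k` twists
    refine ⟨k, hk, ⟨(j + (n - 1) * k) % n, Nat.mod_lt _ (Nat.pos_of_ne_zero hn)⟩, ?_⟩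
    rw [iterate_twist_apply hX, ← hX.map_mod_nat, ← hX.map_mod_nat j]
    congr 3
    obtain ⟨n, rfl⟩ := Nat.exists_eq_succ_of_ne_zero hn
    rw [Nat.mod_add_mod, Nat.succ_sub_one, add_assoc, ← Nat.succ_mul, Nat.add_mul_mod_self_left]

lemma Int.Icc_zero_four : Set.Icc (0 : ℤ) 4 = {0, 1, 2, 3, 4} := by
  ext c
  simp only [Set.mem_Icc, Set.mem_insert_iff, Set.mem_singleton_iff]
  omega

section flipSeq

variable {R : ℕ}

def flipSeq (R j : ℕ) : ℤ := if j % R = 0 then 1 else 1 - (-1) ^ (j / R)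

lemma flipSeq_add_self (hR : R ≠ 0) (j : ℕ) : flipSeq R (j + R) = 2 - flipSeq R j := by
  simp only [flipSeq, Nat.add_mod_right, Nat.add_div_right j (Nat.pos_of_ne_zero hR), pow_succ]
  split_ifs <;> ring

lemma flipSeq_mem_Icc (R j : ℕ) : flipSeq R j ∈ Set.Icc 0 2 := by
  unfold flipSeq
  rcases neg_one_pow_eq_or ℤ (j / R) with h | h <;> split_ifs <;> simp [h]

lemma periodic_flipSeq {n : ℕ} (hR : R ≠ 0) (hn : 2 * R ∣ n) : Periodic (flipSeq R) n := by
  have h2R : Periodic (flipSeq R) (2 * R) := fun j => by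
    rw [two_mul, ← add_assoc, flipSeq_add_self hR, flipSeq_add_self hR, sub_sub_cancel]
  obtain ⟨t, rfl⟩ := hn
  simpa [mul_comm] using h2R.nat_mul t

lemma altSum_flipSeq {k : ℕ} (hk : k ≠ 0) (hkR : k ≤ R) : altSum (flipSeq R) k = 1 := by
  rw [altSum_eq_of_forall_eq hk (c := 0) fun j hj hjk => ?_]
  · simp [flipSeq]
  · simp [flipSeq, Nat.mod_eq_of_lt (hjk.trans_le hkR), Nat.div_eq_of_lt (hjk.trans_le hkR),
      Nat.one_le_iff_ne_zero.mp hj]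

theorem exists_coloring_of_two_mul_dvd_of_dvd {n m : ℕ} (hR : 3 ≤ R) (hRodd : Odd R)
    (hn : n ≠ 0) (hRn : 2 * R ∣ n) (hm : m ≠ 0) (hRm : R ∣ m) :
    ∃ x : Fin n → ℤ, (twist n)^[m] x = x ∧ colors n m x = {0, 1, 2, 3, 4} := by
  have hX := periodic_flipSeq (by omega) hRn
  have hx : IsPeriodicPt (twist n) R fun j : Fin n => flipSeq R j :=
    isPeriodicPt_twist hX fun j => by
      rw [altSum_flipSeq (by omega) le_rfl, flipSeq_add_self (by omega), hRodd.neg_one_pow]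
      ring
  refine ⟨_, hx.trans_dvd hRm, ?_⟩
  rw [colors_eq_of_isPeriodicPt hx (by omega) (Nat.le_of_dvd (by omega) hRm),
    colors_eq_of_periodic hn hX]
  apply Set.Subset.antisymm
  · rw [← Int.Icc_zero_four]
    rintro _ ⟨k, hk, j, rfl⟩
    obtain ⟨h0, h2⟩ := flipSeq_mem_Icc R j
    rcases Nat.eq_zero_or_pos k with rfl | hk0
    · simp only [altSum, Finset.range_zero, Finset.sum_empty, pow_zero]
      constructor <;> linarith
    · rw [altSum_flipSeq hk0.ne' hk.le]
      rcases neg_one_pow_eq_or ℤ k with h | h <;> rw [h] <;> constructor <;> linarith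
  · have hX0 : flipSeq R 0 = 1 := by simp [flipSeq]
    have hX1 : flipSeq R 1 = 0 := by
      simp [flipSeq, Nat.mod_eq_of_lt (by omega : 1 < R), Nat.div_eq_of_lt (by omega : 1 < R)]
    have hXR1 : flipSeq R (1 + R) = 2 := by rw [flipSeq_add_self (by omega), hX1]; rfl
    have hS2 : altSum (flipSeq R) 2 = 1 := altSum_flipSeq (by omega) (by omega)
    rintro c (rfl | rfl | rfl | rfl | rfl)
    · exact ⟨0, by omega, 1, by simp [altSum, hX1]⟩
    · exact ⟨0, by omega, 0, by simp [altSum, hX0]⟩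
    · exact ⟨0, by omega, 1 + R, by simp [altSum, hXR1]⟩
    · exact ⟨2, by omega, 0, by rw [hS2, hX0]; norm_num⟩
    · exact ⟨2, by omega, 1 + R, by rw [hS2, hXR1]; norm_num⟩

end flipSeq

section spikeSeq

variable {R : ℕ}

def spikeSeq (R j : ℕ) : ℤ := if j % R = 0 then 2 else 1

lemma periodic_spikeSeq : Periodic (spikeSeq R) R := fun j => by
  simp only [spikeSeq, Nat.add_mod_right]

lemma spikeSeq_mem_Icc (R j : ℕ) : spikeSeq R j ∈ Set.Icc 1 2 := by
  unfold spikeSeq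
  split_ifs <;> simp

lemma altSum_spikeSeq {k : ℕ} (hk : k ≠ 0) (hkR : k ≤ R) :
    altSum (spikeSeq R) k = 1 + if Even k then 0 else 1 := by
  rw [altSum_eq_of_forall_eq hk (c := 1) fun j hj hjk => ?_]
  · simp only [spikeSeq, Nat.zero_mod, if_true]
    norm_num
  · simp [spikeSeq, Nat.mod_eq_of_lt (hjk.trans_le hkR), Nat.one_le_iff_ne_zero.mp hj]

lemma altSum_spikeSeq_self (hRodd : Odd R) : altSum (spikeSeq R) R = 2 := by
  rw [altSum_spikeSeq hRodd.pos.ne' le_rfl, if_neg (Nat.not_even_iff_odd.mpr hRodd)]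
  norm_num

lemma altSum_spikeSeq_add (hRodd : Odd R) (k : ℕ) :
    altSum (spikeSeq R) (R + k) = 2 - altSum (spikeSeq R) k := by
  rw [altSum_add periodic_spikeSeq, altSum_spikeSeq_self hRodd, hRodd.neg_one_pow]
  ring

lemma spikeSeq_color_mem_Icc {k : ℕ} (hkR : k < R) {v : ℤ} (hv : v ∈ Set.Icc 1 2) :
    2 * altSum (spikeSeq R) k + (-1) ^ k * v ∈ Set.Icc 0 4 := by
  obtain ⟨hv1, hv2⟩ := hv
  rcases Nat.eq_zero_or_pos k with rfl | hk0
  · simp only [altSum, Finset.range_zero, Finset.sum_empty, pow_zero]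
    constructor <;> linarith
  · rw [altSum_spikeSeq hk0.ne' hkR.le]
    rcases Nat.even_or_odd k with he | ho
    · rw [if_pos he, he.neg_one_pow]
      constructor <;> linarith
    · rw [if_neg (Nat.not_even_iff_odd.mpr ho), ho.neg_one_pow]
      constructor <;> linarith

theorem exists_coloring_of_dvd_of_two_mul_dvd {n m : ℕ} (hR : 3 ≤ R) (hRodd : Odd R)
    (hn : n ≠ 0) (hRn : R ∣ n) (hm : m ≠ 0) (hRm : 2 * R ∣ m) :
    ∃ x : Fin n → ℤ, (twist n)^[m] x = x ∧ colors n m x = {0, 1, 2, 3, 4} := by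
  have hX : Periodic (spikeSeq R) n := by
    obtain ⟨t, rfl⟩ := hRn
    simpa [mul_comm] using (periodic_spikeSeq (R := R)).nat_mul t
  have hx : IsPeriodicPt (twist n) (2 * R) fun j : Fin n => spikeSeq R j :=
    isPeriodicPt_twist hX fun j => by
      rw [two_mul R, altSum_spikeSeq_add hRodd, altSum_spikeSeq_self hRodd, ← add_assoc,
        periodic_spikeSeq, periodic_spikeSeq, pow_add, hRodd.neg_one_pow]
      ring
  refine ⟨_, hx.trans_dvd hRm, ?_⟩
  rw [colors_eq_of_isPeriodicPt hx (by omega) (Nat.le_of_dvd (by omega) hRm),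
    colors_eq_of_periodic hn hX]
  apply Set.Subset.antisymm
  · rw [← Int.Icc_zero_four]
    rintro _ ⟨k, hk, j, rfl⟩
    have hv := spikeSeq_mem_Icc R j
    rcases lt_or_ge k R with hkR | hkR
    · exact spikeSeq_color_mem_Icc hkR hv
    · obtain ⟨k, rfl⟩ := Nat.exists_eq_add_of_le hkR
      obtain ⟨h0, h4⟩ := spikeSeq_color_mem_Icc (by omega : k < R) hv
      rw [altSum_spikeSeq_add hRodd, pow_add, hRodd.neg_one_pow]
      constructor <;> linarith
  · have hX0 : spikeSeq R 0 = 2 := by simp [spikeSeq]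
    have hX1 : spikeSeq R 1 = 1 := by simp [spikeSeq, Nat.mod_eq_of_lt (by omega : 1 < R)]
    have hS1 : altSum (spikeSeq R) 1 = 2 := by rw [altSum_spikeSeq (by omega) (by omega)]; simp
    have hS2 : altSum (spikeSeq R) 2 = 1 := by rw [altSum_spikeSeq (by omega) (by omega)]; simp
    rintro c (rfl | rfl | rfl | rfl | rfl)
    · refine ⟨R + 2, by omega, 0, ?_⟩
      rw [altSum_spikeSeq_add hRodd, hS2, hX0, pow_add, hRodd.neg_one_pow]
      norm_num
    · exact ⟨0, by omega, 1, by simp [altSum, hX1]⟩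
    · exact ⟨0, by omega, 0, by simp [altSum, hX0]⟩
    · exact ⟨1, by omega, 1, by rw [hS1, hX1]; norm_num⟩
    · exact ⟨2, by omega, 0, by rw [hS2, hX0]; norm_num⟩

end spikeSeq

theorem stmt_4_general (p q r : ℤ) (hp : p ≠ 0)
    (hq1 : 1 ≤ q) (hr2 : 2 ≤ r) (hro : Odd r)
    (heven : Even p ∨ Even q)
    (n m : ℕ) (hn : (n : ℤ) = q * r) (hm : (m : ℤ) = |p| * r) :
    ∃ x : Fin n → ℤ, (twist n)^[m] x = x ∧ colors n m x = {0, 1, 2, 3, 4} := by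
  lift r to ℕ using by omega
  lift q to ℕ using by omega
  rw [← Int.natCast_natAbs] at hm
  rw [← Int.natAbs_even, Int.even_coe_nat] at heven
  norm_cast at hn hm hq1 hr2 hro
  have hr3 : 3 ≤ r := by obtain ⟨t, rfl⟩ := hro; omega
  have hn0 : n ≠ 0 := by rw [hn]; positivity
  have hm0 : m ≠ 0 := by rw [hm]; exact mul_ne_zero (Int.natAbs_ne_zero.mpr hp) (by omega)
  rcases heven with ⟨t, ht⟩ | ⟨t, ht⟩
  · exact exists_coloring_of_dvd_of_two_mul_dvd hr3 hro hn0 ⟨q, by rw [hn, mul_comm]⟩ hm0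
      ⟨t, by rw [hm, ht]; ring⟩
  · exact exists_coloring_of_two_mul_dvd_of_dvd hr3 hro hn0 ⟨t, by rw [hn, ht]; ring⟩ hm0
      ⟨p.natAbs, by rw [hm, mul_comm]⟩

theorem stmt_4 (p q r : ℤ) (hp : p ≠ 0) (hgcd : Int.gcd p q = 1)
    (hq1 : 1 ≤ q) (hqp : q ≤ |p|) (hr2 : 2 ≤ r) (hro : Odd r)
    (heven : Even p ∨ Even q)
    (n m : ℕ) (hn : (n : ℤ) = q * r) (hm : (m : ℤ) = |p| * r) :
    ∃ x : Fin n → ℤ, (twist n)^[m] x = x ∧ colors n m x = {0, 1, 2, 3, 4} :=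
  stmt_4_general p q r hp hq1 hr2 hro heven n m hn hm
end

section
/- Let r ≥ 2 be an even integer and q ≥ 1 an integer, and let A′ ⊆ ℤ^{qr} be the set of concatenations (a, a, …, a) of q copies of some a ∈ A01 ∪ A12 ∪ A23, with the two constant vectors (1,1,…,1) and (2,2,…,2) removed. Then for every x = (x_1, …, x_{qr}) ∈ A′, the vector (2x_1 − x_2, 2x_1 − x_3, …, 2x_1 − x_{qr}, x_1) (that is, the image T_{qr}(x) of x under one twist) also belongs to A′. -/
/-- The `j`-th block (of length `R`) of a vector `x ∈ ℤ^{QR}`. -/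
def blk (Q R : ℕ) (x : Fin (Q * R) → ℤ) (j : Fin Q) (i : Fin R) : ℤ :=
  x ⟨(j : ℕ) * R + (i : ℕ), by
    calc (j : ℕ) * R + (i : ℕ) < (j : ℕ) * R + R := Nat.add_lt_add_left i.2 _
      _ = ((j : ℕ) + 1) * R := (Nat.succ_mul _ _).symm
      _ ≤ Q * R := Nat.mul_le_mul_right R j.2⟩

/-- `A01`: tuples in `{0,1}^r` with `a_1 = a_r = 1` and `a_{2i} = a_{2i+1}` for
`i = 1,…,r/2−1` (1-indexed); 0-indexed: the pairs `(k, k+1)` with `k` odd agree. -/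
def A01 (R : ℕ) : Set (Fin R → ℤ) :=
  {a | (∀ i, a i = 0 ∨ a i = 1) ∧
       (∀ i : Fin R, (i : ℕ) = 0 ∨ (i : ℕ) = R - 1 → a i = 1) ∧
       (∀ k : Fin R, (k : ℕ) % 2 = 1 → ∀ h : (k : ℕ) + 1 < R, a ⟨(k : ℕ) + 1, h⟩ = a k)}

/-- `A12`: tuples in `{1,2}^r` with `a_{2i−1} = a_{2i}` for `i = 1,…,r/2`
(1-indexed); 0-indexed: the pairs `(k, k+1)` with `k` even agree. -/
def A12 (R : ℕ) : Set (Fin R → ℤ) :=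
  {a | (∀ i, a i = 1 ∨ a i = 2) ∧
       (∀ k : Fin R, (k : ℕ) % 2 = 0 → ∀ h : (k : ℕ) + 1 < R, a ⟨(k : ℕ) + 1, h⟩ = a k)}

/-- `A23`: tuples in `{2,3}^r` with `a_1 = a_r = 2` and `a_{2i} = a_{2i+1}` for
`i = 1,…,r/2−1` (1-indexed); 0-indexed: the pairs `(k, k+1)` with `k` odd agree. -/
def A23 (R : ℕ) : Set (Fin R → ℤ) :=
  {a | (∀ i, a i = 2 ∨ a i = 3) ∧
       (∀ i : Fin R, (i : ℕ) = 0 ∨ (i : ℕ) = R - 1 → a i = 2) ∧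
       (∀ k : Fin R, (k : ℕ) % 2 = 1 → ∀ h : (k : ℕ) + 1 < R, a ⟨(k : ℕ) + 1, h⟩ = a k)}

/-- `A′ ⊆ ℤ^{QR}`: concatenations of `Q` copies of some `a ∈ A01 ∪ A12 ∪ A23`,
with the constant vectors `(1,…,1)` and `(2,…,2)` removed. -/
def Aprime (Q R : ℕ) : Set (Fin (Q * R) → ℤ) :=
  {x | ∃ a ∈ A01 R ∪ A12 R ∪ A23 R, ∀ (j : Fin Q) (i : Fin R), blk Q R x j i = a i}
    \ {fun _ => 1, fun _ => 2}

/-!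
For `0 < n` the twist is `(T_n x)_i = 2 x_0 - x_{(i+1) mod n}` (0-indexed), a formula that only
sees `x` through residues. So if `x` is `Q` copies of a block `a`, then `T_{QR} x` is `Q` copies of
`T_R a`. On blocks, `T_R` moves the value set `{c, d}` to `{c, 2c - d}` with `c = a_0`, and it
turns agreement of the pairs `(k, k+1)` with `k` odd (plus equal end values) into agreement of
those with `k` even and back (for `R` even). Hence it maps `A01` and `A23` into `A12`, and `A12`
into `A01` or `A23` according as `a_0 = 1` or `2`. Finally `T_n x` is constant only if `x` is
the same constant, so the two excluded vectors stay excluded.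
-/

theorem twist_apply_s10 {n : ℕ} (x : Fin n → ℤ) (i : Fin n) :
    twist n x i = 2 * x ⟨0, i.pos⟩ - x ⟨((i : ℕ) + 1) % n, Nat.mod_lt _ i.pos⟩ := by
  unfold twist
  split_ifs with h
  · simp only [Nat.mod_eq_of_lt h]
  · simp only [show (i : ℕ) + 1 = n by omega, Nat.mod_self]
    ring

theorem twist_apply_of_lt {n : ℕ} (x : Fin n → ℤ) {k : ℕ} (hk : k < n) (h : k + 1 < n) :
    twist n x ⟨k, hk⟩ = 2 * x ⟨0, by omega⟩ - x ⟨k + 1, h⟩ := by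
  simp [twist, h]

theorem twist_apply_of_add_one_eq {n : ℕ} (x : Fin n → ℤ) {k : ℕ} (hk : k < n)
    (h : k + 1 = n) : twist n x ⟨k, hk⟩ = x ⟨0, by omega⟩ := by
  simp [twist, h]

theorem eq_const_of_twist_eq_const {n : ℕ} {x : Fin n → ℤ} {c : ℤ}
    (h : twist n x = fun _ => c) : x = fun _ => c := by
  funext ⟨k, hk⟩
  have hfirst : x ⟨0, by omega⟩ = c := by
    rw [← twist_apply_of_add_one_eq x (by omega : n - 1 < n) (by omega), h]
  rcases k with _ | k
  · exact hfirst
  · have := congrFun h ⟨k, by omega⟩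
    rw [twist_apply_of_lt x (by omega) hk] at this
    linarith

theorem apply_eq_of_blk_eq {Q R : ℕ} (hR : 0 < R) {x : Fin (Q * R) → ℤ} {a : Fin R → ℤ}
    (h : ∀ j i, blk Q R x j i = a i) (k : Fin (Q * R)) :
    x k = a ⟨k % R, Nat.mod_lt _ hR⟩ := by
  have hj : (k : ℕ) / R < Q := Nat.div_lt_of_lt_mul (lt_of_lt_of_eq k.2 (Nat.mul_comm Q R))
  rw [← h ⟨k / R, hj⟩ ⟨k % R, Nat.mod_lt _ hR⟩]
  simp only [blk, Nat.div_add_mod']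

theorem blk_twist_of_blk_eq {Q R : ℕ} {x : Fin (Q * R) → ℤ} {a : Fin R → ℤ}
    (h : ∀ j i, blk Q R x j i = a i) (j : Fin Q) (i : Fin R) :
    blk Q R (twist (Q * R) x) j i = twist R a i := by
  have hR := i.pos
  simp only [blk, twist_apply_s10, apply_eq_of_blk_eq hR h]
  congr 3
  rw [Nat.mod_mod_of_dvd _ (Dvd.intro_left Q rfl), Nat.add_assoc, Nat.mul_add_mod_self_right]

def PairsAgree (R p : ℕ) (a : Fin R → ℤ) : Prop :=
  ∀ k : Fin R, (k : ℕ) % 2 = p → ∀ h : (k : ℕ) + 1 < R, a ⟨(k : ℕ) + 1, h⟩ = a k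

namespace PairsAgree

variable {R : ℕ} {a : Fin R → ℤ}

theorem twist_zero {c : ℤ} (hpair : PairsAgree R 1 a)
    (hend : ∀ i : Fin R, (i : ℕ) = 0 ∨ (i : ℕ) = R - 1 → a i = c) :
    PairsAgree R 0 (twist R a) := by
  rintro ⟨k, hk⟩ (hk0 : k % 2 = 0) (h : k + 1 < R)
  rw [twist_apply_of_lt a hk h]
  rcases Nat.lt_or_ge (k + 2) R with h2 | h2
  · rw [twist_apply_of_lt a h h2, hpair ⟨k + 1, h⟩ (show (k + 1) % 2 = 1 by omega) h2]
  · rw [twist_apply_of_add_one_eq a h (by omega), hend ⟨0, _⟩ (Or.inl rfl),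
      hend ⟨k + 1, h⟩ (Or.inr (show k + 1 = R - 1 by omega))]
    ring

theorem twist_one (hR : Even R) (hpair : PairsAgree R 0 a) : PairsAgree R 1 (twist R a) := by
  rintro ⟨k, hk⟩ (hk1 : k % 2 = 1) (h : k + 1 < R)
  have h2 : k + 2 < R := by obtain ⟨m, rfl⟩ := hR; omega
  rw [twist_apply_of_lt a h h2, twist_apply_of_lt a hk h,
    hpair ⟨k + 1, h⟩ (show (k + 1) % 2 = 0 by omega) h2]

theorem twist_apply_of_end (hpair : PairsAgree R 0 a) (i : Fin R)
    (hi : (i : ℕ) = 0 ∨ (i : ℕ) = R - 1) : twist R a i = a ⟨0, i.pos⟩ := by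
  obtain ⟨i, hiR⟩ := i
  dsimp only at hi
  by_cases hlast : i + 1 = R
  · exact twist_apply_of_add_one_eq a hiR hlast
  · obtain rfl : i = 0 := by omega
    rw [twist_apply_of_lt a hiR (by omega), hpair ⟨0, hiR⟩ rfl (show 0 + 1 < R by omega)]
    ring

end PairsAgree

theorem twist_mem_A12_of_mem_A01_or_A23 {R : ℕ} {a : Fin R → ℤ} (ha : a ∈ A01 R ∪ A23 R) :
    twist R a ∈ A12 R := by
  rcases ha with ⟨hval, hend, hpair : PairsAgree R 1 a⟩ |
    ⟨hval, hend, hpair : PairsAgree R 1 a⟩ <;>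
  · refine ⟨fun i => ?_, hpair.twist_zero hend⟩
    have h0 := hend ⟨0, i.pos⟩ (Or.inl rfl)
    have hj := hval ⟨((i : ℕ) + 1) % R, Nat.mod_lt _ i.pos⟩
    rw [twist_apply_s10]
    omega

theorem twist_mem_A01_or_A23_of_mem_A12 {R : ℕ} (hR : Even R) {a : Fin R → ℤ}
    (ha : a ∈ A12 R) : twist R a ∈ A01 R ∪ A23 R := by
  obtain ⟨hval, hpair : PairsAgree R 0 a⟩ := ha
  rcases R.eq_zero_or_pos with rfl | hR0
  · exact Or.inl ⟨finZeroElim, finZeroElim, finZeroElim⟩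
  have hval' (i : Fin R) :
      twist R a i = 2 * a ⟨0, hR0⟩ - 1 ∨ twist R a i = 2 * a ⟨0, hR0⟩ - 2 := by
    have := hval ⟨((i : ℕ) + 1) % R, Nat.mod_lt _ hR0⟩
    rw [twist_apply_s10]
    omega
  rcases hval ⟨0, hR0⟩ with h0 | h0
  · refine Or.inl
      ⟨fun i => ?_, fun i hi => (hpair.twist_apply_of_end i hi).trans h0, hpair.twist_one hR⟩
    have := hval' i
    omega
  · refine Or.inr
      ⟨fun i => ?_, fun i hi => (hpair.twist_apply_of_end i hi).trans h0, hpair.twist_one hR⟩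
    have := hval' i
    omega

theorem twist_mem_A01_union_A12_union_A23 {R : ℕ} (hR : Even R) {a : Fin R → ℤ}
    (ha : a ∈ A01 R ∪ A12 R ∪ A23 R) : twist R a ∈ A01 R ∪ A12 R ∪ A23 R := by
  rcases ha with (ha | ha) | ha
  · exact Or.inl (Or.inr (twist_mem_A12_of_mem_A01_or_A23 (Or.inl ha)))
  · rcases twist_mem_A01_or_A23_of_mem_A12 hR ha with h | h
    exacts [Or.inl (Or.inl h), Or.inr h]
  · exact Or.inl (Or.inr (twist_mem_A12_of_mem_A01_or_A23 (Or.inr ha)))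

theorem stmt_10_general (Q R : ℕ) (hRe : Even R) :
    ∀ x ∈ Aprime Q R, twist (Q * R) x ∈ Aprime Q R := by
  rintro x ⟨⟨a, ha, hblk⟩, hx⟩
  exact ⟨⟨twist R a, twist_mem_A01_union_A12_union_A23 hRe ha, blk_twist_of_blk_eq hblk⟩,
    fun hconst => hx (hconst.imp eq_const_of_twist_eq_const eq_const_of_twist_eq_const)⟩

theorem stmt_10 (Q R : ℕ) (hQ : 1 ≤ Q) (hR2 : 2 ≤ R) (hRe : Even R) :
    ∀ x ∈ Aprime Q R, twist (Q * R) x ∈ Aprime Q R :=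
  stmt_10_general Q R hRe
end
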